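/- Let p ≥ 1 be an integer, let N be a p-rooted almost-binary phylogenetic network on X, and let Z be a maximal zig-zag trail of N that is a W-fence of length 6, with canonical edge ordering (e_1, ..., e_6). Then E(Z) has exactly three B-admissible subsets, encoded as ⟨101011⟩, ⟨101101⟩, and ⟨110101⟩, and each of them contains both incoming edges of exactly one vertex of Z, so that each induces exactly one reticulation among the vertices of Z. -/

import Mathlib

open Finset

variable {V : Type} [DecidableEq V] [Fintype V]

/-- The vertex set of the digraph given by the edge set `E`. -/
def verts (E : Finset (V × V)) : Finset V :=
  E.image Prod.fst ∪ E.image Prod.snd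

/-- In-degree of `v` in the digraph with edge set `E`. -/
def indeg (E : Finset (V × V)) (v : V) : ℕ :=
  (E.filter fun e => e.2 = v).card

/-- Out-degree of `v` in the digraph with edge set `E`. -/
def outdeg (E : Finset (V × V)) (v : V) : ℕ :=
  (E.filter fun e => e.1 = v).card

/-- `E` is (the edge set of) a `p`-rooted almost-binary phylogenetic network on `X`:
a finite simple DAG with exactly `p` in-degree-0 vertices, each of out-degree 1 or 2 (the roots),
whose set of in-degree-1, out-degree-0 vertices is `X` (the leaves), and all of whose other
vertices have in-degree and out-degree in `{1, 2}`. -/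
structure IsPhyloNet (E : Finset (V × V)) (p : ℕ) (X : Finset V) : Prop where
  acyclic : ∀ v : V, ¬ Relation.TransGen (fun a b => (a, b) ∈ E) v v
  roots_card : ((verts E).filter fun v => indeg E v = 0).card = p
  root_outdeg : ∀ v ∈ verts E, indeg E v = 0 → outdeg E v = 1 ∨ outdeg E v = 2
  leaves_eq : (verts E).filter (fun v => indeg E v = 1 ∧ outdeg E v = 0) = X
  internal_deg : ∀ v ∈ verts E, indeg E v ≠ 0 → v ∉ X →
    (indeg E v = 1 ∨ indeg E v = 2) ∧ (outdeg E v = 1 ∨ outdeg E v = 2)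

/-- Two directed edges share a tail or share a head. -/
def Shares (e f : V × V) : Prop := e.1 = f.1 ∨ e.2 = f.2

/-- `S` is (the edge set of) a zig-zag trail of the digraph `E`: a subgraph with `m ≥ 1`
edges which can be ordered so that consecutive edges share a head or share a tail. -/
def IsZigzagTrail (E S : Finset (V × V)) : Prop :=
  S ⊆ E ∧ ∃ l : List (V × V), l ≠ [] ∧ l.Nodup ∧ l.toFinset = S ∧ l.Chain' Shares

/-- A maximal zig-zag trail: one that is not a proper subgraph of another zig-zag trail. -/
def IsMaximalZigzagTrail (E S : Finset (V × V)) : Prop :=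
  IsZigzagTrail E S ∧ ∀ S', IsZigzagTrail E S' → ¬ S ⊂ S'

/-- The `i`-th edge (0-indexed) of a zig-zag sequence on vertices `f 0, f 1, ...`;
when `down = true` the first edge descends (`f 0 > f 1`), and directions alternate. -/
def zigEdge (f : ℕ → V) (down : Bool) (i : ℕ) : V × V :=
  if decide (i % 2 = 0) = down then (f i, f (i + 1)) else (f (i + 1), f i)

/-- `S` consists of the `m` distinct edges of the zig-zag sequence on `f 0, ..., f m`. -/
def IsZigzagShape (S : Finset (V × V)) (m : ℕ) (f : ℕ → V) (down : Bool) : Prop :=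
  S = (Finset.range m).image (zigEdge f down) ∧
  ∀ i < m, ∀ j < m, zigEdge f down i = zigEdge f down j → i = j

/-- A crown: an even number `m` of edges written cyclically as `v₀ > v₁ < ⋯ < v_m = v₀`. -/
def IsCrown (S : Finset (V × V)) : Prop :=
  ∃ m f, 1 ≤ m ∧ m % 2 = 0 ∧ f m = f 0 ∧ IsZigzagShape S m f true

/-- An M-fence: a non-crown with an even number `m` of edges,
of the form `v₀ < v₁ > ⋯ > v_m ≠ v₀`. -/
def IsMFence (S : Finset (V × V)) : Prop :=
  ¬ IsCrown S ∧ ∃ m f, 1 ≤ m ∧ m % 2 = 0 ∧ f m ≠ f 0 ∧ IsZigzagShape S m f false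

/-- A W-fence: a non-crown with an even number `m` of edges,
of the form `v₀ > v₁ < ⋯ < v_m ≠ v₀`. -/
def IsWFence (S : Finset (V × V)) : Prop :=
  ¬ IsCrown S ∧ ∃ m f, 1 ≤ m ∧ m % 2 = 0 ∧ f m ≠ f 0 ∧ IsZigzagShape S m f true

/-- An N-fence: a non-crown with an odd number `m` of edges,
of the form `v₀ > v₁ < ⋯ > v_m`. -/
def IsNFence (S : Finset (V × V)) : Prop :=
  ¬ IsCrown S ∧ ∃ m f, m % 2 = 1 ∧ IsZigzagShape S m f true

/-- A support network of `N = (V, E)`: a spanning subgraph that is itself a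
`p`-rooted almost-binary phylogenetic network on `X` (identified with its edge set). -/
def IsSupportNet (E S : Finset (V × V)) (p : ℕ) (X : Finset V) : Prop :=
  S ⊆ E ∧ verts S = verts E ∧ IsPhyloNet S p X

/-- A minimal support network: no support network is a proper subgraph of it. -/
def IsMinimalSupportNet (E S : Finset (V × V)) (p : ℕ) (X : Finset V) : Prop :=
  IsSupportNet E S p X ∧ ∀ S', IsSupportNet E S' p X → ¬ S' ⊂ S

/-- A minimum support network: one with the fewest edges among all support networks. -/
def IsMinimumSupportNet (E S : Finset (V × V)) (p : ℕ) (X : Finset V) : Prop :=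
  IsSupportNet E S p X ∧ ∀ S', IsSupportNet E S' p X → S.card ≤ S'.card

/-- `S ⊆ Z` is A-admissible (degrees taken in the ambient network `E`):
(C1) `S` contains every edge `(u,v)` of `Z` with `outdeg u = 1` or `indeg v = 1`;
(C2) of any two distinct edges of `Z` sharing a tail or a head, `S` contains at least one. -/
def AAdmissible (E Z S : Finset (V × V)) : Prop :=
  S ⊆ Z ∧
  (∀ e ∈ Z, (outdeg E e.1 = 1 ∨ indeg E e.2 = 1) → e ∈ S) ∧
  (∀ e₁ ∈ Z, ∀ e₂ ∈ Z, e₁ ≠ e₂ → Shares e₁ e₂ → e₁ ∈ S ∨ e₂ ∈ S)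

/-- A B-admissible subset: an A-admissible subset none of whose proper subsets
is A-admissible. -/
def BAdmissible (E Z S : Finset (V × V)) : Prop :=
  AAdmissible E Z S ∧ ∀ S', S' ⊂ S → ¬ AAdmissible E Z S'

/-- A C-admissible subset: an A-admissible subset of minimum cardinality. -/
def CAdmissible (E Z S : Finset (V × V)) : Prop :=
  AAdmissible E Z S ∧ ∀ S', AAdmissible E Z S' → S.card ≤ S'.card

/-- One subdivision step: an edge `(u, v)` is replaced by `(u, w), (w, v)` for a fresh
vertex `w`. -/
def SubdivStep (T T' : Finset (V × V)) : Prop :=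
  ∃ u w v, (u, v) ∈ T ∧ w ∉ verts T ∧
    T' = insert (u, w) (insert (w, v) (T.erase (u, v)))

/-- `S` is a subdivision of `T` (zero or more subdivision steps). -/
def IsSubdivisionOf (S T : Finset (V × V)) : Prop :=
  Relation.ReflTransGen SubdivStep T S

/-- A rooted binary phylogenetic tree on `X`: a 1-rooted network on `X` in which every
non-root, non-leaf vertex has in-degree 1 and out-degree 2. -/
def IsBinaryPhyloTree (T : Finset (V × V)) (X : Finset V) : Prop :=
  IsPhyloNet T 1 X ∧
  ∀ v ∈ verts T, indeg T v ≠ 0 → v ∉ X → indeg T v = 1 ∧ outdeg T v = 2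

/-- `N = (V, E)` is tree-based: it has a support tree, i.e. a spanning subgraph that is a
subdivision of some rooted binary phylogenetic tree on `X`. -/
def IsTreeBased (E : Finset (V × V)) (X : Finset V) : Prop :=
  ∃ S T, S ⊆ E ∧ verts S = verts E ∧ IsBinaryPhyloTree T X ∧ IsSubdivisionOf S T

/-- The underlying undirected simple graph of the digraph with edge set `S`. -/
def usym (S : Finset (V × V)) : SimpleGraph V where
  Adj u v := u ≠ v ∧ ((u, v) ∈ S ∨ (v, u) ∈ S)
  symm := ⟨fun _ _ h => ⟨h.1.symm, h.2.symm⟩⟩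
  loopless := ⟨fun _ h => h.1 rfl⟩

/-- Two edges of `S` lie in a common block of the underlying undirected graph:
they are equal or lie on a common cycle. -/
def SameBlock (S : Finset (V × V)) (e f : V × V) : Prop :=
  e = f ∨ ∃ (a : V) (w : (usym S).Walk a a), w.IsCycle ∧
    s(e.1, e.2) ∈ w.edges ∧ s(f.1, f.2) ∈ w.edges

/-- The number of reticulations (in-degree-2 vertices) contained in the block of the
edge `e` of `S`. -/
noncomputable def blockReticCount (S : Finset (V × V)) (e : V × V) : ℕ :=
  Set.ncard {v : V | indeg S v = 2 ∧ ∃ f ∈ S, SameBlock S e f ∧ (f.1 = v ∨ f.2 = v)}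

/-- The level of the network with edge set `S`: the maximum number of reticulations
contained in a block. -/
noncomputable def level (S : Finset (V × V)) : ℕ :=
  S.sup (blockReticCount S)

/-! In a maximal zig-zag trail no edge of the network can be attached at either end, so the
end vertices `v₀` and `v₆` have out-degree 1 and condition (C1) forces `e₁` and `e₆`. Every inner
edge has a tail of out-degree at least 2 and a head of in-degree at least 2 already inside the
fence, so (C1) forces nothing else. Admissibility therefore depends only on which of the six edge
positions are chosen, and the minimal admissible choices, together with the in-degrees they give,
are found by a finite computation on subsets of `Fin 6`. -/

open Function

section Admissibility

theorem Shares.symm {α : Type} {e f : α × α} (h : Shares e f) : Shares f e :=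
  h.imp Eq.symm Eq.symm

variable {α : Type} [DecidableEq α] {E Z S : Finset (α × α)}

theorem one_lt_outdeg {u v w : α} (hv : (u, v) ∈ E) (hw : (u, w) ∈ E) (hvw : v ≠ w) :
    1 < outdeg E u :=
  one_lt_card.2 ⟨(u, v), by simp [hv], (u, w), by simp [hw], by simp [hvw]⟩

theorem one_lt_indeg {u v w : α} (hu : (u, w) ∈ E) (hv : (v, w) ∈ E) (huv : u ≠ v) :
    1 < indeg E w :=
  one_lt_card.2 ⟨(u, w), by simp [hu], (v, w), by simp [hv], by simp [huv]⟩

theorem outdeg_eq_one_of_forall {u v : α} (h : (u, v) ∈ E)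
    (huniq : ∀ g ∈ E, g.1 = u → g = (u, v)) : outdeg E u = 1 :=
  card_eq_one.2 ⟨(u, v), by
    ext g
    simp only [mem_filter, mem_singleton]
    exact ⟨fun hg => huniq g hg.1 hg.2, fun hg => hg ▸ ⟨h, rfl⟩⟩⟩

theorem IsMaximalZigzagTrail.mem_of_shares_head (hZ : IsMaximalZigzagTrail E Z)
    {a : α × α} {l : List (α × α)} (hnd : (a :: l).Nodup) (hlZ : (a :: l).toFinset = Z)
    (hc : (a :: l).IsChain Shares) {g : α × α} (hg : g ∈ E) (hs : Shares g a) : g ∈ Z := by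
  by_contra hgZ
  refine hZ.2 (insert g Z) ⟨insert_subset hg hZ.1.1, g :: a :: l, List.cons_ne_nil _ _,
    List.nodup_cons.2 ⟨by simpa [← hlZ] using hgZ, hnd⟩, by simp [← hlZ], hc.cons_cons hs⟩
    (ssubset_insert hgZ)

theorem IsMaximalZigzagTrail.mem_of_shares_getLast (hZ : IsMaximalZigzagTrail E Z)
    {a : α × α} {l : List (α × α)} (hnd : (l ++ [a]).Nodup) (hlZ : (l ++ [a]).toFinset = Z)
    (hc : (l ++ [a]).IsChain Shares) {g : α × α} (hg : g ∈ E) (hs : Shares a g) : g ∈ Z := by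
  refine hZ.mem_of_shares_head (l := l.reverse) ?_ ?_ ?_ hg hs.symm <;>
    rw [← List.reverse_concat']
  · exact List.nodup_reverse.2 hnd
  · rw [List.toFinset_reverse, hlZ]
  · exact List.isChain_reverse.2 (hc.imp fun _ _ => Shares.symm)

theorem bAdmissible_iff_minimal : BAdmissible E Z S ↔ Minimal (AAdmissible E Z) S := by
  rw [minimal_iff_forall_lt]
  rfl

end Admissibility

section Pattern

variable {α ι κ : Type} {f : κ → α} {tail head : ι → κ}

/-- Once `f` and the pattern `i ↦ (tail i, head i)` are injective, admissibility of edge subsets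
becomes a decidable property of index sets, `PatternAdmissible`. -/
def patternEdge (f : κ → α) (tail head : ι → κ) (i : ι) : α × α := (f (tail i), f (head i))

def PatternAdmissible (forced : ι → Prop) (tail head : ι → κ) (T : Finset ι) : Prop :=
  (∀ i, forced i → i ∈ T) ∧
    ∀ i j, i ≠ j → (tail i = tail j ∨ head i = head j) → i ∈ T ∨ j ∈ T

theorem patternEdge_injective (hf : Injective f) (hth : Injective fun i => (tail i, head i)) :
    Injective (patternEdge f tail head) := fun i j h =>
  hth (by simpa [patternEdge, hf.eq_iff] using h)

theorem shares_patternEdge_iff (hf : Injective f) {i j : ι} :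
    Shares (patternEdge f tail head i) (patternEdge f tail head j) ↔
      tail i = tail j ∨ head i = head j := by
  simp [Shares, patternEdge, hf.eq_iff]

theorem aAdmissible_image_patternEdge_iff [DecidableEq α] [Fintype ι] {E : Finset (α × α)}
    (hf : Injective f) (he : Injective (patternEdge f tail head)) (T : Finset ι) :
    AAdmissible E (univ.image (patternEdge f tail head)) (T.image (patternEdge f tail head)) ↔
      PatternAdmissible (fun i => outdeg E (f (tail i)) = 1 ∨ indeg E (f (head i)) = 1)
        tail head T := by
  simp only [AAdmissible, PatternAdmissible, image_subset_image (subset_univ T), true_and,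
    forall_mem_image, mem_univ, forall_const, he.mem_finset_image, he.ne_iff,
    shares_patternEdge_iff hf]
  rfl

theorem bAdmissible_image_iff [DecidableEq α] [Fintype ι] {E : Finset (α × α)} {e : ι → α × α}
    (he : Injective e) {P : Finset ι → Prop}
    (hP : ∀ T, AAdmissible E (univ.image e) (T.image e) ↔ P T) (S : Finset (α × α)) :
    BAdmissible E (univ.image e) S ↔ ∃ T, Minimal P T ∧ T.image e = S := by
  have hrange : {S | AAdmissible E (univ.image e) S} ⊆ Set.range (mapEmbedding ⟨e, he⟩) := by
    intro S hS
    obtain ⟨T, -, rfl⟩ := subset_image_iff.1 hS.1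
    exact ⟨T, by simp [mapEmbedding_apply, map_eq_image]⟩
  have hmin (T : Finset ι) :
      Minimal (AAdmissible E (univ.image e)) (T.image e) ↔ Minimal P T := by
    simpa [mapEmbedding_apply, map_eq_image, hP] using
      (mapEmbedding ⟨e, he⟩).minimal_apply_mem_iff (x := T) hrange
  rw [bAdmissible_iff_minimal]
  constructor
  · intro hS
    obtain ⟨T, -, rfl⟩ := subset_image_iff.1 hS.prop.1
    exact ⟨T, (hmin T).1 hS, rfl⟩
  · rintro ⟨T, hT, rfl⟩
    exact (hmin T).2 hT

theorem indeg_image_patternEdge [DecidableEq α] [DecidableEq κ] (hf : Injective f)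
    (he : Injective (patternEdge f tail head)) (T : Finset ι) (k : κ) :
    indeg (T.image (patternEdge f tail head)) (f k) = (T.filter fun i => head i = k).card := by
  rw [indeg, filter_image, card_image_of_injective _ he]
  simp [patternEdge, hf.eq_iff]

end Pattern

section WFence

/-! The W-fence `0 > 1 < 2 > 3 < 4 > 5 < 6`. Position `i : Fin 6` is the edge `e_{i+1}`, so
`T : Finset (Fin 6)` is the string `⟨b₁ … b₆⟩` with `b_{i+1} = 1` iff `i ∈ T`. -/

def wTail : Fin 6 → Fin 7 := ![0, 2, 2, 4, 4, 6]

def wHead : Fin 6 → Fin 7 := ![1, 1, 3, 3, 5, 5]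

set_option synthInstance.maxSize 1024 in
set_option maxRecDepth 100000 in
theorem minimal_patternAdmissible_wFence_iff (T : Finset (Fin 6)) :
    Minimal (PatternAdmissible (fun i => i = 0 ∨ i = 5) wTail wHead) T ↔
      T = {0, 2, 4, 5} ∨ T = {0, 2, 3, 5} ∨ T = {0, 1, 3, 5} := by
  revert T
  unfold Minimal PatternAdmissible
  beta_reduce
  decide

theorem patternEdge_wFence_injective {α : Type} {f : Fin 7 → α} (hf : Injective f) :
    Injective (patternEdge f wTail wHead) :=
  patternEdge_injective hf (by decide)

variable {α : Type} [DecidableEq α] {E : Finset (α × α)} {f : Fin 7 → α}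

theorem image_patternEdge_wFence (f : Fin 7 → α) :
    univ.image (patternEdge f wTail wHead) =
      {(f 0, f 1), (f 2, f 1), (f 2, f 3), (f 4, f 3), (f 4, f 5), (f 6, f 5)} := by
  ext x
  simp [patternEdge, Fin.exists_fin_succ, wTail, wHead, eq_comm]

theorem verts_image_patternEdge_wFence (f : Fin 7 → α) :
    verts (univ.image (patternEdge f wTail wHead)) = univ.image f := by
  ext v
  simp [verts, image_patternEdge_wFence, Fin.exists_fin_succ, eq_comm]
  tauto

theorem IsMaximalZigzagTrail.outdeg_wFence_ends_eq_one (hf : Injective f)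
    (hZ : IsMaximalZigzagTrail E (univ.image (patternEdge f wTail wHead))) :
    outdeg E (f 0) = 1 ∧ outdeg E (f 6) = 1 := by
  rw [image_patternEdge_wFence] at hZ
  have hnd : [(f 0, f 1), (f 2, f 1), (f 2, f 3), (f 4, f 3), (f 4, f 5), (f 6, f 5)].Nodup := by
    simp [hf.eq_iff]
  have hc : [(f 0, f 1), (f 2, f 1), (f 2, f 3), (f 4, f 3), (f 4, f 5), (f 6, f 5)].IsChain
      Shares := by
    simp [Shares]
  constructor
  · refine outdeg_eq_one_of_forall (v := f 1) (hZ.1.1 (by simp)) fun g hg hg₁ => ?_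
    have hgZ := hZ.mem_of_shares_head hnd (by simp) hc hg (Or.inl hg₁)
    simp only [mem_insert, mem_singleton] at hgZ
    rcases hgZ with h | h | h | h | h | h <;> subst h <;> simp_all [hf.eq_iff]
  · refine outdeg_eq_one_of_forall (v := f 5) (hZ.1.1 (by simp)) fun g hg hg₁ => ?_
    have hgZ := hZ.mem_of_shares_getLast (a := (f 6, f 5))
      (l := [(f 0, f 1), (f 2, f 1), (f 2, f 3), (f 4, f 3), (f 4, f 5)]) hnd (by simp) hc hg
      (Or.inl hg₁.symm)
    simp only [mem_insert, mem_singleton] at hgZ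
    rcases hgZ with h | h | h | h | h | h <;> subst h <;> simp_all [hf.eq_iff]

theorem outdeg_wTail_eq_one_or_indeg_wHead_eq_one_iff (hf : Injective f)
    (hE : ∀ i, patternEdge f wTail wHead i ∈ E) (h₀ : outdeg E (f 0) = 1)
    (h₆ : outdeg E (f 6) = 1) (i : Fin 6) :
    (outdeg E (f (wTail i)) = 1 ∨ indeg E (f (wHead i)) = 1) ↔ i = 0 ∨ i = 5 := by
  have h₁ : 1 < indeg E (f 1) := one_lt_indeg (hE 0) (hE 1) (hf.ne (by decide))
  have h₂ : 1 < outdeg E (f 2) := one_lt_outdeg (hE 1) (hE 2) (hf.ne (by decide))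
  have h₃ : 1 < indeg E (f 3) := one_lt_indeg (hE 2) (hE 3) (hf.ne (by decide))
  have h₄ : 1 < outdeg E (f 4) := one_lt_outdeg (hE 3) (hE 4) (hf.ne (by decide))
  have h₅ : 1 < indeg E (f 5) := one_lt_indeg (hE 4) (hE 5) (hf.ne (by decide))
  fin_cases i <;> simp [wTail, wHead, h₀, h₆] <;> omega

theorem bAdmissible_wFence_iff (hf : Injective f)
    (hZ : IsMaximalZigzagTrail E (univ.image (patternEdge f wTail wHead))) (S : Finset (α × α)) :
    BAdmissible E (univ.image (patternEdge f wTail wHead)) S ↔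
      ∃ T : Finset (Fin 6), (T = {0, 2, 4, 5} ∨ T = {0, 2, 3, 5} ∨ T = {0, 1, 3, 5}) ∧
        T.image (patternEdge f wTail wHead) = S := by
  have he := patternEdge_wFence_injective hf
  obtain ⟨h₀, h₆⟩ := hZ.outdeg_wFence_ends_eq_one hf
  have hforced := outdeg_wTail_eq_one_or_indeg_wHead_eq_one_iff hf
    (fun i => hZ.1.1 (mem_image_of_mem _ (mem_univ i))) h₀ h₆
  simp_rw [← minimal_patternAdmissible_wFence_iff]
  refine bAdmissible_image_iff he (fun T => ?_) S
  rw [aAdmissible_image_patternEdge_iff hf he]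
  simp only [PatternAdmissible, hforced]

theorem card_filter_indeg_eq_two_wFence (hf : Injective f) {T : Finset (Fin 6)}
    (hT : T = {0, 2, 4, 5} ∨ T = {0, 2, 3, 5} ∨ T = {0, 1, 3, 5}) :
    ((verts (univ.image (patternEdge f wTail wHead))).filter fun v =>
      indeg (T.image (patternEdge f wTail wHead)) v = 2).card = 1 := by
  rw [verts_image_patternEdge_wFence, filter_image, card_image_of_injective _ hf]
  simp only [indeg_image_patternEdge hf (patternEdge_wFence_injective hf)]
  rcases hT with rfl | rfl | rfl <;> decide

end WFence

theorem stmt16_general (E : Finset (V × V))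
    (v₀ v₁ v₂ v₃ v₄ v₅ v₆ : V) (hdist : ([v₀, v₁, v₂, v₃, v₄, v₅, v₆] : List V).Nodup)
    (e₁ e₂ e₃ e₄ e₅ e₆ : V × V)
    (he₁ : e₁ = (v₀, v₁)) (he₂ : e₂ = (v₂, v₁)) (he₃ : e₃ = (v₂, v₃))
    (he₄ : e₄ = (v₄, v₃)) (he₅ : e₅ = (v₄, v₅)) (he₆ : e₆ = (v₆, v₅))
    (Z : Finset (V × V)) (hZdef : Z = {e₁, e₂, e₃, e₄, e₅, e₆})
    (hmax : IsMaximalZigzagTrail E Z) :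
    (∀ S, BAdmissible E Z S ↔
      (S = {e₁, e₃, e₅, e₆} ∨ S = {e₁, e₃, e₄, e₆} ∨ S = {e₁, e₂, e₄, e₆})) ∧
    (∀ S, BAdmissible E Z S → ((verts Z).filter fun v => indeg S v = 2).card = 1) := by
  subst he₁ he₂ he₃ he₄ he₅ he₆ hZdef
  set f : Fin 7 → V := ![v₀, v₁, v₂, v₃, v₄, v₅, v₆]
  have hf : Injective f := List.nodup_ofFn.1 hdist
  have hZ : ({(v₀, v₁), (v₂, v₁), (v₂, v₃), (v₄, v₃), (v₄, v₅), (v₆, v₅)} : Finset (V × V)) =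
      univ.image (patternEdge f wTail wHead) :=
    (image_patternEdge_wFence f).symm
  rw [hZ] at hmax ⊢
  refine ⟨fun S => ?_, fun S hS => ?_⟩
  · rw [bAdmissible_wFence_iff hf hmax]
    simp [or_and_right, exists_or, image_insert, patternEdge, wTail, wHead, f, eq_comm]
  · obtain ⟨T, hT, rfl⟩ := (bAdmissible_wFence_iff hf hmax S).1 hS
    exact card_filter_indeg_eq_two_wFence hf hT

/-- A maximal zig-zag trail that is a W-fence of length 6 has exactly three B-admissible
subsets, `⟨101011⟩`, `⟨101101⟩`, `⟨110101⟩`, and each of them contains both incoming edges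
of exactly one vertex of `Z`, hence induces exactly one reticulation among its vertices. -/
theorem stmt16 (p : ℕ) (hp : 1 ≤ p) (X : Finset V) (hX : X.Nonempty)
    (E : Finset (V × V)) (hN : IsPhyloNet E p X)
    (v₀ v₁ v₂ v₃ v₄ v₅ v₆ : V) (hdist : ([v₀, v₁, v₂, v₃, v₄, v₅, v₆] : List V).Nodup)
    (e₁ e₂ e₃ e₄ e₅ e₆ : V × V)
    (he₁ : e₁ = (v₀, v₁)) (he₂ : e₂ = (v₂, v₁)) (he₃ : e₃ = (v₂, v₃))
    (he₄ : e₄ = (v₄, v₃)) (he₅ : e₅ = (v₄, v₅)) (he₆ : e₆ = (v₆, v₅))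
    (Z : Finset (V × V)) (hZdef : Z = {e₁, e₂, e₃, e₄, e₅, e₆})
    (hmax : IsMaximalZigzagTrail E Z) :
    (∀ S, BAdmissible E Z S ↔
      (S = {e₁, e₃, e₅, e₆} ∨ S = {e₁, e₃, e₄, e₆} ∨ S = {e₁, e₂, e₄, e₆})) ∧
    (∀ S, BAdmissible E Z S → ((verts Z).filter fun v => indeg S v = 2).card = 1) :=
  stmt16_general E v₀ v₁ v₂ v₃ v₄ v₅ v₆ hdist e₁ e₂ e₃ e₄ e₅ e₆ he₁ he₂ he₃ he₄ he₅ he₆ Z hZdef hmax
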